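/- arXiv:1703.06075 — 2 statements merged into one kernel-verified Lean document; each statement's English description precedes it below -/
import Mathlib

section
/- Let m, n, q be positive integers with q odd and nm even. Then the series Σ_{k=1}^{∞} (−1)^{k−1} / ( Π_{j=0}^{m−1} F_{nk+njq} · Π_{j=m+1}^{2m} F_{nk+njq} ) converges, and its sum equals (1 / L_{mnq}) · Σ_{k=1}^{q} (−1)^{k−1} / ( Π_{j=0}^{2m−1} F_{nk+njq} ). -/
open Filter Topology

/-- The Lucas numbers: `L 0 = 2`, `L 1 = 1`, `L (n+2) = L (n+1) + L n`. -/
def lucas : ℕ → ℕ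
  | 0 => 2
  | 1 => 1
  | n + 2 => lucas (n + 1) + lucas n

/-! Write `g_j = F_{nk+njq}` and `t = mnq`, which is even. Binet's formulas give
`F_{x+2t} + F_x = L_t F_{x+t}`, i.e. `g_0 + g_{2m} = L_t g_m`, and this splits the `k`-th term
as `(1/L_t) (1/∏_{j<2m} g_j + 1/∏_{j<2m} g_{j+1})`. The second product is the first one at
`k + q`, and `q` is odd, so the signed series telescopes with step `q`; its tail tends to `0`
because the Fibonacci products grow without bound. -/

open Finset Real
open scoped goldenRatio

theorem lucas_pos : ∀ t, 0 < lucas t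
  | 0 => by decide
  | 1 => by decide
  | t + 2 => Nat.add_pos_left (lucas_pos (t + 1)) _

theorem coe_lucas_eq : ∀ t, (lucas t : ℝ) = φ ^ t + ψ ^ t
  | 0 => by norm_num [lucas]
  | 1 => by rw [lucas, Nat.cast_one, pow_one, pow_one, goldenRatio_add_goldenConj]
  | t + 2 => by
    rw [lucas, Nat.cast_add, coe_lucas_eq (t + 1), coe_lucas_eq t]
    linear_combination (-φ ^ t) * goldenRatio_sq - ψ ^ t * goldenConj_sq

theorem coe_fib_add_two_mul_add_neg_one_pow_mul_fib (x t : ℕ) :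
    (Nat.fib (x + 2 * t) : ℝ) + (-1) ^ t * Nat.fib x = Nat.fib (x + t) * lucas t := by
  have hsign : (-1 : ℝ) ^ t = φ ^ t * ψ ^ t := by rw [← mul_pow, goldenRatio_mul_goldenConj]
  rw [hsign, coe_fib_eq, coe_fib_eq, coe_fib_eq, coe_lucas_eq]
  ring

theorem inv_prod_omit_middle {K : Type*} [Field K] (g : ℕ → K) (m : ℕ)
    (hg : ∀ j ≤ 2 * m, g j ≠ 0) {L : K} (hL0 : L ≠ 0) (hL : g 0 + g (2 * m) = L * g m) :
    ((∏ j ∈ range m, g j) * ∏ j ∈ Icc (m + 1) (2 * m), g j)⁻¹ =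
      L⁻¹ *
        ((∏ j ∈ range (2 * m), g j)⁻¹ + (∏ j ∈ range (2 * m), g (j + 1))⁻¹) := by
  set Q := ∏ j ∈ range (2 * m + 1), g j with hQ
  have hmid : Q = (∏ j ∈ range m, g j) * g m * ∏ j ∈ Icc (m + 1) (2 * m), g j := by
    rw [hQ, ← prod_range_mul_prod_Ico g (by omega : m ≤ 2 * m + 1),
      prod_eq_prod_Ico_succ_bot (by omega : m < 2 * m + 1), Ico_add_one_right_eq_Icc, mul_assoc]
  have htop : Q = (∏ j ∈ range (2 * m), g j) * g (2 * m) := prod_range_succ _ _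
  have hbot : Q = (∏ j ∈ range (2 * m), g (j + 1)) * g 0 := prod_range_succ' _ _
  calc ((∏ j ∈ range m, g j) * ∏ j ∈ Icc (m + 1) (2 * m), g j)⁻¹
      = L⁻¹ * ((g 0 + g (2 * m)) / Q) := by
        rw [hL, hmid]
        field_simp [hg m (by omega)]
    _ = L⁻¹ * (g (2 * m) / Q + g 0 / Q) := by rw [add_comm, add_div]
    _ = _ := by
        nth_rw 1 [htop]
        nth_rw 1 [hbot]
        rw [div_mul_cancel_right₀ (hg _ le_rfl), div_mul_cancel_right₀ (hg 0 (Nat.zero_le _))]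

section Telescoping

variable {M : Type*} [AddCommGroup M] [TopologicalSpace M] [IsTopologicalAddGroup M]
  {c : ℕ → M}

theorem tendsto_sum_range_sub_shift (hc : Tendsto c atTop (𝓝 0)) (q : ℕ) :
    Tendsto (fun N => ∑ k ∈ range N, (c k - c (k + q))) atTop
      (𝓝 (∑ k ∈ range q, c k)) := by
  have htele (N : ℕ) : ∑ k ∈ range N, (c k - c (k + q)) =
      ∑ k ∈ range q, c k - ∑ k ∈ range q, c (N + k) := by
    rw [sum_sub_distrib, sub_eq_sub_iff_add_eq_add, ← sum_range_add]
    simp_rw [add_comm _ q]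
    rw [← sum_range_add, add_comm]
  have htail : Tendsto (fun N => ∑ k ∈ range q, c (N + k)) atTop (𝓝 0) := by
    simpa using tendsto_finsetSum (range q) fun k _ => hc.comp (tendsto_add_atTop_nat k)
  simpa [htele] using tendsto_const_nhds.sub htail

theorem tendsto_sum_Icc_sub_shift (hc : Tendsto c atTop (𝓝 0)) (q : ℕ) :
    Tendsto (fun N => ∑ k ∈ Icc 1 N, (c k - c (k + q))) atTop
      (𝓝 (∑ k ∈ Icc 1 q, c k)) := by
  have hIcc (f : ℕ → M) (N : ℕ) : ∑ k ∈ Icc 1 N, f k = ∑ k ∈ range N, f (k + 1) := by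
    rw [range_eq_Ico, sum_Ico_add', zero_add, Ico_add_one_right_eq_Icc]
  simp_rw [hIcc, add_right_comm _ 1 q]
  exact tendsto_sum_range_sub_shift (hc.comp (tendsto_add_atTop_nat 1)) q

end Telescoping

theorem tendsto_prod_fib_atTop {n : ℕ} (hn : 0 < n) (q : ℕ) {r : ℕ} (hr : 0 < r) :
    Tendsto (fun k => ∏ j ∈ range r, Nat.fib (n * k + n * j * q)) atTop atTop := by
  have hfib : Tendsto Nat.fib atTop atTop :=
    (tendsto_add_atTop_iff_nat 2).1 Nat.fib_add_two_strictMono.tendsto_atTop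
  refine tendsto_atTop_mono' atTop ?_ hfib
  filter_upwards [eventually_gt_atTop 0] with k hk
  have hpos : 0 < ∏ j ∈ range r, Nat.fib (n * k + n * j * q) :=
    prod_pos fun j _ => Nat.fib_pos.2 (Nat.add_pos_left (Nat.mul_pos hn hk) _)
  calc Nat.fib k ≤ Nat.fib (n * k + n * 0 * q) :=
        Nat.fib_mono (by simpa using Nat.le_mul_of_pos_left k hn)
    _ ≤ _ := Nat.le_of_dvd hpos (dvd_prod_of_mem _ (mem_range.2 hr))

theorem tendsto_neg_one_pow_div_prod_fib {n : ℕ} (hn : 0 < n) (q : ℕ) {r : ℕ} (hr : 0 < r) :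
    Tendsto (fun k => (-1 : ℝ) ^ (k - 1) / ∏ j ∈ range r, (Nat.fib (n * k + n * j * q) : ℝ))
      atTop (𝓝 0) := by
  have hinv : Tendsto (fun k => (∏ j ∈ range r, (Nat.fib (n * k + n * j * q) : ℝ))⁻¹)
      atTop (𝓝 0) := by
    simpa only [Nat.cast_prod, Function.comp_def] using tendsto_inv_atTop_zero.comp
      ((tendsto_natCast_atTop_atTop (R := ℝ)).comp (tendsto_prod_fib_atTop hn q hr))
  refine squeeze_zero_norm (fun k => le_of_eq ?_) hinv
  rw [norm_div, norm_pow, norm_neg, norm_one, one_pow, one_div,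
    Real.norm_of_nonneg (by positivity)]

theorem inv_prod_fib_omit_middle {m n q k : ℕ} (hn : 0 < n) (hk : 0 < k)
    (hmnq : Even (m * n * q)) :
    ((∏ j ∈ range m, (Nat.fib (n * k + n * j * q) : ℝ)) *
        ∏ j ∈ Icc (m + 1) (2 * m), (Nat.fib (n * k + n * j * q) : ℝ))⁻¹ =
      (lucas (m * n * q) : ℝ)⁻¹ *
        ((∏ j ∈ range (2 * m), (Nat.fib (n * k + n * j * q) : ℝ))⁻¹ +
          (∏ j ∈ range (2 * m), (Nat.fib (n * (k + q) + n * j * q) : ℝ))⁻¹) := by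
  have hfib (j : ℕ) : (Nat.fib (n * k + n * j * q) : ℝ) ≠ 0 :=
    Nat.cast_ne_zero.2 (Nat.fib_pos.2 (Nat.add_pos_left (Nat.mul_pos hn hk) _)).ne'
  have hL0 : (lucas (m * n * q) : ℝ) ≠ 0 := Nat.cast_ne_zero.2 (lucas_pos _).ne'
  have hL : (Nat.fib (n * k + n * 0 * q) : ℝ) + Nat.fib (n * k + n * (2 * m) * q) =
      lucas (m * n * q) * Nat.fib (n * k + n * m * q) := by
    have h := coe_fib_add_two_mul_add_neg_one_pow_mul_fib (n * k) (m * n * q)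
    rw [hmnq.neg_one_pow, one_mul] at h
    rw [mul_zero, zero_mul, add_zero, add_comm, mul_comm (lucas (m * n * q) : ℝ),
      show n * (2 * m) * q = 2 * (m * n * q) by ring, show n * m * q = m * n * q by ring, h]
  have hshift : ∏ j ∈ range (2 * m), (Nat.fib (n * (k + q) + n * j * q) : ℝ) =
      ∏ j ∈ range (2 * m), (Nat.fib (n * k + n * (j + 1) * q) : ℝ) :=
    prod_congr rfl fun j _ => by congr 2; ring
  rw [hshift]
  exact inv_prod_omit_middle (fun j => (Nat.fib (n * k + n * j * q) : ℝ)) m (fun j _ => hfib j)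
    hL0 hL

theorem stmt_6_general (m n q : ℕ) (hm : 0 < m) (hn : 0 < n)
    (hqodd : Odd q) (hnm : Even (n * m)) :
    Tendsto (fun N => ∑ k ∈ Finset.Icc 1 N,
        (-1 : ℝ) ^ (k - 1) / ((∏ j ∈ Finset.range m, (Nat.fib (n * k + n * j * q) : ℝ)) *
          ∏ j ∈ Finset.Icc (m + 1) (2 * m), (Nat.fib (n * k + n * j * q) : ℝ)))
      atTop
      (𝓝 ((1 / (lucas (m * n * q) : ℝ)) *
        ∑ k ∈ Finset.Icc 1 q,
          (-1 : ℝ) ^ (k - 1) / ∏ j ∈ Finset.range (2 * m), (Nat.fib (n * k + n * j * q) : ℝ))) := by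
  have hmnq : Even (m * n * q) := (Nat.mul_comm n m ▸ hnm).mul_right q
  have hc := tendsto_neg_one_pow_div_prod_fib hn q (by omega : 0 < 2 * m)
  refine ((tendsto_sum_Icc_sub_shift hc q).const_mul (1 / (lucas (m * n * q) : ℝ))).congr
    fun N => ?_
  rw [mul_sum]
  refine sum_congr rfl fun k hk => ?_
  obtain ⟨hk, -⟩ := mem_Icc.1 hk
  have hsign : (-1 : ℝ) ^ (k + q - 1) = -(-1) ^ (k - 1) := by
    rw [show k + q - 1 = k - 1 + q by omega, pow_add, hqodd.neg_one_pow, mul_neg_one]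
  simp only [div_eq_mul_inv]
  rw [inv_prod_fib_omit_middle hn hk hmnq, hsign]
  ring

/-- Theorem (`q` odd, `nm` even):
`Σ_{k=1}^{∞} (−1)^{k−1}/(Π_{j=0}^{m−1} F_{nk+njq} · Π_{j=m+1}^{2m} F_{nk+njq})
  = (1/L_{mnq}) Σ_{k=1}^{q} (−1)^{k−1}/(Π_{j=0}^{2m−1} F_{nk+njq})`. -/
theorem stmt_6 (m n q : ℕ) (hm : 0 < m) (hn : 0 < n) (hq : 0 < q)
    (hqodd : Odd q) (hnm : Even (n * m)) :
    Tendsto (fun N => ∑ k ∈ Finset.Icc 1 N,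
        (-1 : ℝ) ^ (k - 1) / ((∏ j ∈ Finset.range m, (Nat.fib (n * k + n * j * q) : ℝ)) *
          ∏ j ∈ Finset.Icc (m + 1) (2 * m), (Nat.fib (n * k + n * j * q) : ℝ)))
      atTop
      (𝓝 ((1 / (lucas (m * n * q) : ℝ)) *
        ∑ k ∈ Finset.Icc 1 q,
          (-1 : ℝ) ^ (k - 1) / ∏ j ∈ Finset.range (2 * m), (Nat.fib (n * k + n * j * q) : ℝ))) :=
  stmt_6_general m n q hm hn hqodd hnm
end

section
/- Let m, n, q be positive odd integers. Then both of the following hold: (i) the series Σ_{k=1}^{∞} F_{nk+mnq} / ( Π_{j=0}^{m} F_{nk+2jnq} ) converges with sum (1 / L_{mnq}) · Σ_{k=1}^{2q} 1 / ( Π_{j=0}^{m−1} F_{nk+2jnq} ); and (ii) the series Σ_{k=1}^{∞} (−1)^{k−1} · F_{nk+mnq} / ( Π_{j=0}^{m} F_{nk+2jnq} ) converges with sum (1 / L_{mnq}) · Σ_{k=1}^{2q} (−1)^{k−1} / ( Π_{j=0}^{m−1} F_{nk+2jnq} ). -/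
open Filter Topology

/-! For odd `b` one has `F (a + 2b) - F a = L b * F (a + b)`. Take `b = mnq` and
`P k = ∏_{j<m} F (nk + 2jnq)`; the full product `∏_{j≤m}` equals both `P k * F (nk + 2mnq)` and
`P (k + 2q) * F (nk)`, so the `k`-th term is `(ε k / P k - ε (k + 2q) / P (k + 2q)) / L (mnq)`
for the sign `ε k`, which has period `2q`. The series telescopes with step `2q`, and since
`P k → ∞` its sum is `(1 / L (mnq)) * ∑_{k=1}^{2q} ε k / P k`. -/

open Finset

theorem lucas_pos_s15 (b : ℕ) : 0 < lucas b := by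
  induction b using Nat.twoStepInduction with
  | zero | one => simp [lucas]
  | more n _ ih => simp only [lucas]; omega

theorem lucas_mul_fib_add {R : Type*} [CommRing R] (a b : ℕ) :
    (lucas b : R) * Nat.fib (a + b) = Nat.fib (a + 2 * b) + (-1) ^ b * Nat.fib a := by
  induction b using Nat.twoStepInduction generalizing a with
  | zero => simp [lucas]; ring
  | one =>
    simp only [lucas, show a + 2 * 1 = a + 2 by rfl, Nat.fib_add_two]
    push_cast; ring
  | more b ih₀ ih₁ =>
    -- the case `(a, b + 2)` is the sum of the cases `(a + 2, b)` and `(a + 1, b + 1)`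
    have h₀ := ih₀ (a + 2)
    have h₁ := ih₁ (a + 1)
    rw [show a + 2 + b = a + (b + 2) by ring,
      show a + 2 + 2 * b = a + 2 * (b + 1) by ring] at h₀
    rw [show a + 1 + (b + 1) = a + (b + 2) by ring,
      show a + 1 + 2 * (b + 1) = a + 2 * b + 3 by ring] at h₁
    simp only [lucas, Nat.cast_add, show a + 2 * (b + 2) = a + 2 * b + 2 + 2 by ring,
      show a + 2 * (b + 1) = a + 2 * b + 2 by ring, show a + 2 * b + 3 = a + 2 * b + 1 + 2 by ring,
      Nat.fib_add_two] at h₀ h₁ ⊢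
    linear_combination h₀ + h₁

theorem fib_add_two_mul_sub_fib_of_odd {R : Type*} [CommRing R] {b : ℕ} (hb : Odd b) (a : ℕ) :
    (Nat.fib (a + 2 * b) : R) - Nat.fib a = lucas b * Nat.fib (a + b) := by
  rw [lucas_mul_fib_add, hb.neg_one_pow]; ring

theorem Finset.sum_range_sub_shift {G : Type*} [AddCommGroup G] (g : ℕ → G) (d N : ℕ) :
    ∑ i ∈ range N, (g i - g (i + d)) = ∑ i ∈ range d, g i - ∑ i ∈ range d, g (N + i) := by
  induction N with
  | zero => simp
  | succ N ih =>
    have h := (sum_range_succ (fun i => g (N + i)) d).symm.trans (sum_range_succ' _ d)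
    simp only [add_zero, ← add_assoc, add_right_comm N _ 1] at h
    rw [sum_range_succ, ih, eq_sub_of_add_eq h.symm]
    abel

theorem tendsto_sum_Icc_of_eq_sub_shift {G : Type*} [AddCommGroup G] [TopologicalSpace G]
    [IsTopologicalAddGroup G] {f a : ℕ → G} {d : ℕ} (hf : ∀ k, 1 ≤ k → f k = a k - a (k + d))
    (ha : Tendsto a atTop (𝓝 0)) :
    Tendsto (fun N => ∑ k ∈ Icc 1 N, f k) atTop (𝓝 (∑ k ∈ Icc 1 d, a k)) := by
  have hIcc : ∀ (g : ℕ → G) N, ∑ k ∈ Icc 1 N, g k = ∑ i ∈ range N, g (i + 1) := by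
    intro g N
    rw [range_eq_Ico, sum_Ico_add', ← Ico_add_one_right_eq_Icc]
  have htail : Tendsto (fun N => ∑ i ∈ range d, a (N + i + 1)) atTop (𝓝 0) := by
    simpa using tendsto_finsetSum (range d) fun i _ =>
      ha.comp ((tendsto_add_atTop_nat (i + 1)).congr fun N => by ring)
  have hlim := (tendsto_const_nhds (x := ∑ i ∈ range d, a (i + 1))).sub htail
  rw [sub_zero, ← hIcc] at hlim
  refine hlim.congr fun N => ?_
  rw [hIcc a d, hIcc f, ← sum_range_sub_shift (fun i => a (i + 1))]
  refine sum_congr rfl fun i _ => ?_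
  rw [hf (i + 1) (Nat.le_add_left 1 i), add_right_comm]

theorem fib_div_prod_range_succ_eq {K : Type*} [Field K] [CharZero K] {m s c : ℕ}
    (hms : Odd (m * s)) (hc : 0 < c) :
    (Nat.fib (c + m * s) : K) / ∏ j ∈ range (m + 1), (Nat.fib (c + 2 * j * s) : K) =
      (1 / ∏ j ∈ range m, (Nat.fib (c + 2 * j * s) : K)
        - 1 / ∏ j ∈ range m, (Nat.fib (c + 2 * s + 2 * j * s) : K)) / lucas (m * s) := by
  set P := ∏ j ∈ range (m + 1), (Nat.fib (c + 2 * j * s) : K) with hP_def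
  have hlast :
      P = (∏ j ∈ range m, (Nat.fib (c + 2 * j * s) : K)) * Nat.fib (c + 2 * (m * s)) := by
    rw [hP_def, prod_range_succ, mul_assoc]
  have hfirst : P = (∏ j ∈ range m, (Nat.fib (c + 2 * s + 2 * j * s) : K)) * Nat.fib c := by
    rw [hP_def, prod_range_succ']
    simp only [mul_zero, zero_mul, add_zero]
    congr! 4 with j
    ring
  have hL : (lucas (m * s) : K) ≠ 0 := Nat.cast_ne_zero.2 (lucas_pos_s15 _).ne'
  have hfib_c : (Nat.fib c : K) ≠ 0 := Nat.cast_ne_zero.2 (Nat.fib_pos.2 hc).ne'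
  have hfib_last : (Nat.fib (c + 2 * (m * s)) : K) ≠ 0 :=
    Nat.cast_ne_zero.2 (Nat.fib_pos.2 (by omega)).ne'
  rw [one_div, one_div, ← div_mul_cancel_right₀ hfib_last, ← hlast,
    ← div_mul_cancel_right₀ hfib_c, ← hfirst, ← sub_div, fib_add_two_mul_sub_fib_of_odd hms]
  field_simp

theorem tendsto_fib_atTop : Tendsto Nat.fib atTop atTop :=
  tendsto_atTop_mono' _ ((eventually_ge_atTop 5).mono fun _ => Nat.le_fib_self) tendsto_id

theorem tendsto_prod_range_fib_atTop {ι : Type*} {l : Filter ι} {c : ι → ℕ}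
    (hc : Tendsto c l atTop) {m : ℕ} (hm : m ≠ 0) (s : ℕ) :
    Tendsto (fun x => ∏ j ∈ range m, (Nat.fib (c x + 2 * j * s) : ℝ)) l atTop := by
  have hfirst : ∀ᶠ x in l, Nat.fib (c x) ≤ ∏ j ∈ range m, Nat.fib (c x + 2 * j * s) := by
    filter_upwards [hc.eventually_ge_atTop 1] with x hx
    simpa using single_le_prod' (fun j _ => Nat.fib_pos.2 (by omega))
      (mem_range.2 (Nat.pos_of_ne_zero hm)) (f := fun j => Nat.fib (c x + 2 * j * s))
  simpa [Function.comp_def] using (tendsto_natCast_atTop_atTop (R := ℝ)).comp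
    (tendsto_atTop_mono' l hfirst (tendsto_fib_atTop.comp hc))

theorem tendsto_sum_Icc_fib_div_prod {m n q : ℕ} (hm : Odd m) (hn : Odd n) (hq : Odd q)
    {ε : ℕ → ℝ} (hε : ∀ k, 1 ≤ k → ε (k + 2 * q) = ε k) (hε_le : ∀ k, |ε k| ≤ 1) :
    Tendsto (fun N => ∑ k ∈ Icc 1 N,
        ε k * (Nat.fib (n * k + m * n * q) : ℝ) /
          ∏ j ∈ range (m + 1), (Nat.fib (n * k + 2 * j * n * q) : ℝ))
      atTop
      (𝓝 ((1 / (lucas (m * n * q) : ℝ)) *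
        ∑ k ∈ Icc 1 (2 * q), ε k / ∏ j ∈ range m, (Nat.fib (n * k + 2 * j * n * q) : ℝ))) := by
  rw [mul_sum]
  refine tendsto_sum_Icc_of_eq_sub_shift (fun k hk => ?_) ?_
  · have key := fib_div_prod_range_succ_eq (K := ℝ) (s := n * q) (c := n * k)
      (by rw [← mul_assoc]; exact (hm.mul hn).mul hq) (Nat.mul_pos hn.pos hk)
    rw [hε k hk, mul_div_assoc, show n * (k + 2 * q) = n * k + 2 * (n * q) by ring]
    simp only [mul_assoc] at key ⊢
    rw [key]
    ring
  · have hdiv := tendsto_bdd_div_atTop_nhds_zero (b := -1) (B := 1)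
      (.of_forall fun k => (abs_le.1 (hε_le k)).1) (.of_forall fun k => (abs_le.1 (hε_le k)).2)
      (tendsto_prod_range_fib_atTop (tendsto_id.const_mul_atTop' hn.pos) hm.pos.ne' (n * q))
    simpa [mul_assoc] using hdiv.const_mul (1 / (lucas (m * n * q) : ℝ))

theorem stmt_15_general (m n q : ℕ) (hm : Odd m) (hn : Odd n) (hq : Odd q) :
    Tendsto (fun N => ∑ k ∈ Finset.Icc 1 N,
        (Nat.fib (n * k + m * n * q) : ℝ) /
          ∏ j ∈ Finset.range (m + 1), (Nat.fib (n * k + 2 * j * n * q) : ℝ))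
      atTop
      (𝓝 ((1 / (lucas (m * n * q) : ℝ)) *
        ∑ k ∈ Finset.Icc 1 (2 * q),
          (1 : ℝ) / ∏ j ∈ Finset.range m, (Nat.fib (n * k + 2 * j * n * q) : ℝ)))
    ∧
    Tendsto (fun N => ∑ k ∈ Finset.Icc 1 N,
        (-1 : ℝ) ^ (k - 1) * (Nat.fib (n * k + m * n * q) : ℝ) /
          ∏ j ∈ Finset.range (m + 1), (Nat.fib (n * k + 2 * j * n * q) : ℝ))
      atTop
      (𝓝 ((1 / (lucas (m * n * q) : ℝ)) *
        ∑ k ∈ Finset.Icc 1 (2 * q),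
          (-1 : ℝ) ^ (k - 1) / ∏ j ∈ Finset.range m, (Nat.fib (n * k + 2 * j * n * q) : ℝ))) := by
  constructor
  · simpa using tendsto_sum_Icc_fib_div_prod hm hn hq (ε := fun _ => 1) (fun _ _ => rfl)
      (fun _ => by simp)
  · refine tendsto_sum_Icc_fib_div_prod hm hn hq (fun k hk => ?_) (fun k => by simp)
    rw [show k + 2 * q - 1 = k - 1 + 2 * q by omega, pow_add, pow_mul]
    simp

/-- Theorem (`m`, `n`, `q` odd): both
`Σ_{k=1}^{∞} F_{nk+mnq} / (Π_{j=0}^{m} F_{nk+2jnq})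
  = (1/L_{mnq}) Σ_{k=1}^{2q} 1/(Π_{j=0}^{m−1} F_{nk+2jnq})` and
`Σ_{k=1}^{∞} (−1)^{k−1} F_{nk+mnq} / (Π_{j=0}^{m} F_{nk+2jnq})
  = (1/L_{mnq}) Σ_{k=1}^{2q} (−1)^{k−1}/(Π_{j=0}^{m−1} F_{nk+2jnq})`. -/
theorem stmt_15 (m n q : ℕ) (hm : Odd m) (hn : Odd n) (hq : Odd q)
    (hm' : 0 < m) (hn' : 0 < n) (hq' : 0 < q) :
    Tendsto (fun N => ∑ k ∈ Finset.Icc 1 N,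
        (Nat.fib (n * k + m * n * q) : ℝ) /
          ∏ j ∈ Finset.range (m + 1), (Nat.fib (n * k + 2 * j * n * q) : ℝ))
      atTop
      (𝓝 ((1 / (lucas (m * n * q) : ℝ)) *
        ∑ k ∈ Finset.Icc 1 (2 * q),
          (1 : ℝ) / ∏ j ∈ Finset.range m, (Nat.fib (n * k + 2 * j * n * q) : ℝ)))
    ∧
    Tendsto (fun N => ∑ k ∈ Finset.Icc 1 N,
        (-1 : ℝ) ^ (k - 1) * (Nat.fib (n * k + m * n * q) : ℝ) /
          ∏ j ∈ Finset.range (m + 1), (Nat.fib (n * k + 2 * j * n * q) : ℝ))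
      atTop
      (𝓝 ((1 / (lucas (m * n * q) : ℝ)) *
        ∑ k ∈ Finset.Icc 1 (2 * q),
          (-1 : ℝ) ^ (k - 1) / ∏ j ∈ Finset.range m, (Nat.fib (n * k + 2 * j * n * q) : ℝ))) :=
  stmt_15_general m n q hm hn hq
end
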